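/- Asymptotic primal feasibility of the aggregate dual consensus ADMM. Let ρ > 0 and suppose, for each i ∈ 𝒩, the sequences satisfy p_i^0 = 0 and, for all k ≥ 0: p_i^{k+1} = p_i^k + ρ ∑_{j∈𝒩_i} (y_i^k − y_j^k); r_i^{k+1} = ρ ∑_{j∈𝒩_i} (y_i^k + y_j^k) − (b_i + p_i^{k+1}); (x_i^{k+1}, t_i^{k+1}) is a global minimizer over (x_i, t_i) ∈ ℝ^{n_i} × K of f_i(x_i) + (1/(4 ρ d_i)) ‖A_i x_i + r_i^{k+1} − t_i‖²; and y_i^{k+1} = (1/(2 ρ d_i)) Π_{K∘}(A_i x_i^{k+1} + r_i^{k+1}). If there is y* ∈ ℝ^m with y_i^k → y* for every i ∈ 𝒩, then: (i) w^k := ∑_{i∈𝒩} t_i^k ∈ K for every k ≥ 1; and (ii) ∑_{i∈𝒩} (A_i x_i^k − b_i) − w^k → 0 as k → ∞. -/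

import Mathlib

open Filter Topology RealInnerProductSpace

open Classical in
/-- Euclidean projection onto a set (well-defined on nonempty closed convex sets). -/
noncomputable def projSet {E : Type*} [NormedAddCommGroup E] [InnerProductSpace ℝ E]
    (C : Set E) (z : E) : E :=
  if h : ∃ p ∈ C, ∀ q ∈ C, ‖z - p‖ ≤ ‖z - q‖ then h.choose else z

/-- Polar cone of a set. -/
def polarSet {E : Type*} [NormedAddCommGroup E] [InnerProductSpace ℝ E] (C : Set E) : Set E :=
  {y | ∀ x ∈ C, ⟪x, y⟫ ≤ 0}

/-- Normal cone of a convex set `C` at a point `x`. -/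
def nCone {E : Type*} [NormedAddCommGroup E] [InnerProductSpace ℝ E]
    (C : Set E) (x : E) : Set E :=
  {u | ∀ w ∈ C, ⟪u, w - x⟫ ≤ 0}

/-- Convex (Fenchel) conjugate of an extended-real-valued function. -/
noncomputable def econj {E : Type*} [NormedAddCommGroup E] [InnerProductSpace ℝ E]
    (f : E → EReal) (y : E) : EReal :=
  ⨆ x, ((⟪y, x⟫ : ℝ) : EReal) - f x

open Classical in
/-- Extended-real-valued indicator function of a set. -/
noncomputable def eindicator {E : Type*} (C : Set E) (y : E) : EReal :=
  if y ∈ C then 0 else ⊤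

/-- Subdifferential of an extended-real-valued function. -/
def ESubdiff {E : Type*} [NormedAddCommGroup E] [InnerProductSpace ℝ E]
    (f : E → EReal) (x : E) : Set E :=
  {u | ∀ v, f x + ((⟪u, v - x⟫ : ℝ) : EReal) ≤ f v}

/-- Convexity of an extended-real-valued function. -/
def EConvexFn {E : Type*} [AddCommMonoid E] [Module ℝ E] (f : E → EReal) : Prop :=
  ∀ x y : E, ∀ a b : ℝ, 0 ≤ a → 0 ≤ b → a + b = 1 →
    f (a • x + b • y) ≤ (a : EReal) * f x + (b : EReal) * f y

/-- Properness of an extended-real-valued function. -/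
def EProper {E : Type*} (f : E → EReal) : Prop :=
  (∀ x, f x ≠ ⊥) ∧ ∃ x, f x ≠ ⊤

/-!
Taking `xᵢ = xᵢᵏ⁺¹` in the joint minimization shows that `tᵢᵏ⁺¹` is the projection onto `K` of
`zᵢ = Aᵢxᵢᵏ⁺¹ + rᵢᵏ⁺¹`, so by Moreau's decomposition `zᵢ - tᵢᵏ⁺¹ = Π_{K∘} zᵢ = 2ρdᵢ yᵢᵏ⁺¹`.
The multipliers `pᵢᵏ` accumulate graph-Laplacian increments, hence sum to zero over the agents.
Summing `Aᵢxᵢᵏ⁺¹ - bᵢ - tᵢᵏ⁺¹ = 2ρdᵢ yᵢᵏ⁺¹ - ρ ∑ⱼ (yᵢᵏ + yⱼᵏ) + pᵢᵏ⁺¹` thus writes the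
feasibility gap in terms of the dual iterates alone, and each summand tends to
`2ρdᵢ y* - 2ρdᵢ y* = 0`. Finally `wᵏ ∈ K` because a convex cone is closed under addition.
-/

section Cone

variable {E : Type*} [AddCommGroup E] [Module ℝ E] {K : Set E}

theorem Convex.add_mem_of_pos_smul_mem (hK : Convex ℝ K)
    (hcone : ∀ c : ℝ, 0 < c → ∀ x ∈ K, c • x ∈ K) {a b : E} (ha : a ∈ K) (hb : b ∈ K) :
    a + b ∈ K := by
  have hmid : (1 / 2 : ℝ) • a + (1 / 2 : ℝ) • b ∈ K :=
    hK ha hb (by norm_num) (by norm_num) (by norm_num)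
  simpa [smul_add, smul_smul] using hcone 2 two_pos _ hmid

theorem Convex.sum_mem_of_pos_smul_mem (hK : Convex ℝ K)
    (hcone : ∀ c : ℝ, 0 < c → ∀ x ∈ K, c • x ∈ K) {ι : Type*} {s : Finset ι} (hs : s.Nonempty)
    {v : ι → E} (hv : ∀ i ∈ s, v i ∈ K) : ∑ i ∈ s, v i ∈ K :=
  Finset.sum_induction_nonempty _ (· ∈ K) (fun _ _ => hK.add_mem_of_pos_smul_mem hcone) hs hv

end Cone

section Projection

variable {E : Type*} [NormedAddCommGroup E] [InnerProductSpace ℝ E]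

theorem convex_polarSet (C : Set E) : Convex ℝ (polarSet C) := by
  simp only [polarSet, Set.ofPred_forall]
  exact convex_iInter₂ fun x _ => convex_halfSpace_le (innerₗ E x).isLinear 0

theorem isMinOn_norm_sub_iff_inner_le_zero {C : Set E} (hC : Convex ℝ C) {z a : E}
    (ha : a ∈ C) : IsMinOn (fun q => ‖z - q‖) C a ↔ ∀ w ∈ C, ⟪z - a, w - a⟫ ≤ 0 := by
  rw [← norm_eq_iInf_iff_real_inner_le_zero hC ha]
  refine ⟨fun h => (h.iInf_eq ha).symm, fun h q hq => ?_⟩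
  change ‖z - a‖ ≤ ‖z - q‖
  rw [h]
  exact ciInf_le ⟨0, by rintro _ ⟨w, rfl⟩; exact norm_nonneg _⟩ (⟨q, hq⟩ : C)

theorem projSet_eq_of_isMinOn {C : Set E} (hC : Convex ℝ C) {z a : E} (ha : a ∈ C)
    (hmin : IsMinOn (fun q => ‖z - q‖) C a) : projSet C z = a := by
  have hex : ∃ p ∈ C, ∀ q ∈ C, ‖z - p‖ ≤ ‖z - q‖ := ⟨a, ha, hmin⟩
  obtain ⟨hb, hbmin⟩ := hex.choose_spec
  rw [projSet, dif_pos hex]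
  set b := hex.choose
  have hab := (isMinOn_norm_sub_iff_inner_le_zero hC ha).1 hmin b hb
  have hba := (isMinOn_norm_sub_iff_inner_le_zero hC hb).1 hbmin a ha
  have hsq : ⟪b - a, b - a⟫ ≤ 0 :=
    calc ⟪b - a, b - a⟫ = ⟪(z - a) - (z - b), b - a⟫ := by rw [sub_sub_sub_cancel_left]
      _ = ⟪z - a, b - a⟫ + ⟪z - b, a - b⟫ := by
        rw [inner_sub_left, ← neg_sub b a, inner_neg_right, sub_eq_add_neg]
      _ ≤ 0 := add_nonpos hab hba
  exact sub_eq_zero.1 (real_inner_self_nonpos.1 hsq)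

theorem projSet_polarSet_eq_sub_of_isMinOn {K : Set E} (hK : Convex ℝ K)
    (hcone : ∀ c : ℝ, 0 < c → ∀ x ∈ K, c • x ∈ K) {z t : E} (ht : t ∈ K)
    (hmin : IsMinOn (fun q => ‖z - q‖) K t) : projSet (polarSet K) z = z - t := by
  have hvar := (isMinOn_norm_sub_iff_inner_le_zero hK ht).1 hmin
  -- testing the variational inequality at `2 • t` and `(1/2) • t` gives both signs
  have horth : ⟪z - t, t⟫ = 0 := by
    have h2 := hvar _ (hcone 2 two_pos t ht)
    have h12 := hvar _ (hcone (1 / 2) (by norm_num) t ht)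
    rw [show (2 : ℝ) • t - t = t by module] at h2
    rw [show (1 / 2 : ℝ) • t - t = -((1 / 2 : ℝ) • t) by module, inner_neg_right,
      real_inner_smul_right] at h12
    linarith
  have hpolar : z - t ∈ polarSet K := fun w hw => by
    have := hvar w hw
    rw [inner_sub_right, horth, sub_zero] at this
    rwa [real_inner_comm]
  refine projSet_eq_of_isMinOn (convex_polarSet K) hpolar
    ((isMinOn_norm_sub_iff_inner_le_zero (convex_polarSet K) hpolar).2 fun u hu => ?_)
  rw [sub_sub_cancel, inner_sub_right, real_inner_comm (z - t) t, horth, sub_zero]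
  exact hu t ht

end Projection

namespace EReal

theorem ne_top_of_add_coe_le {u v : EReal} {a b : ℝ} (hv : v ≠ ⊤) (h : u + a ≤ v + b) :
    u ≠ ⊤ := by
  rintro rfl
  rw [top_add_coe, top_le_iff] at h
  exact (add_lt_top hv (coe_ne_top b)).ne h

theorem coe_le_coe_of_add_le_add_left {u : EReal} {a b : ℝ} (hbot : u ≠ ⊥) (htop : u ≠ ⊤)
    (h : u + a ≤ u + b) : a ≤ b := by
  rw [← coe_toReal htop hbot, ← coe_add, ← coe_add, EReal.coe_le_coe_iff] at h
  linarith

end EReal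

theorem isMinOn_norm_sub_of_forall_add_le {X F : Type*} [NormedAddCommGroup F]
    {f : X → EReal} (hf : EProper f) {c : ℝ} (hc : 0 < c) {g : X → F} {K : Set F}
    {x₀ : X} {t₀ : F} (ht₀ : t₀ ∈ K)
    (hmin : ∀ x, ∀ t ∈ K, f x₀ + ((c * ‖g x₀ - t₀‖ ^ 2 : ℝ) : EReal)
      ≤ f x + ((c * ‖g x - t‖ ^ 2 : ℝ) : EReal)) :
    IsMinOn (fun t => ‖g x₀ - t‖) K t₀ := by
  obtain ⟨hbot, x, hx⟩ := hf
  have htop : f x₀ ≠ ⊤ := EReal.ne_top_of_add_coe_le hx (hmin x t₀ ht₀)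
  intro t ht
  have h := EReal.coe_le_coe_of_add_le_add_left (hbot x₀) htop (hmin x₀ t ht)
  exact (pow_le_pow_iff_left₀ (norm_nonneg _) (norm_nonneg _) two_ne_zero).1
    (le_of_mul_le_mul_left h hc)

namespace SimpleGraph

variable {V : Type*} [Fintype V] (G : SimpleGraph V) [DecidableRel G.Adj]

theorem sum_sum_neighborFinset_comm {M : Type*} [AddCommMonoid M] (g : V → V → M) :
    ∑ i, ∑ j ∈ G.neighborFinset i, g i j = ∑ i, ∑ j ∈ G.neighborFinset i, g j i :=
  Finset.sum_comm' fun i j => by simp [G.adj_comm]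

theorem sum_eq_zero_of_laplacian_increments {M : Type*} [AddCommGroup M] [Module ℝ M]
    (ρ : ℝ) (p y : V → ℕ → M) (hp0 : ∀ i, p i 0 = 0)
    (hp : ∀ i k, p i (k + 1) = p i k + ρ • ∑ j ∈ G.neighborFinset i, (y i k - y j k)) (k : ℕ) :
    ∑ i, p i k = 0 := by
  induction k with
  | zero => simp [hp0]
  | succ k ih =>
    simp only [hp, Finset.sum_add_distrib, ih, ← Finset.smul_sum, Finset.sum_sub_distrib,
      G.sum_sum_neighborFinset_comm fun i j => y j k, sub_self, smul_zero, zero_add]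

theorem tendsto_degree_smul_sub_sum_neighborFinset {X : Type*} [NormedAddCommGroup X]
    [NormedSpace ℝ X] (ρ : ℝ) {y : V → ℕ → X} {y' : X}
    (hy : ∀ i, Tendsto (fun k => y i k) atTop (𝓝 y')) (i : V) :
    Tendsto (fun k => (2 * ρ * (G.degree i : ℝ)) • y i (k + 1)
      - ρ • ∑ j ∈ G.neighborFinset i, (y i k + y j k)) atTop (𝓝 0) := by
  have hlim := (((tendsto_add_atTop_iff_nat 1).2 (hy i)).const_smul
    (2 * ρ * (G.degree i : ℝ))).sub ((tendsto_finsetSum (G.neighborFinset i) fun j _ =>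
      (hy i).add (hy j)).const_smul ρ)
  convert hlim using 2
  rw [Finset.sum_const, card_neighborFinset_eq_degree, ← Nat.cast_smul_eq_nsmul ℝ]
  module

end SimpleGraph

theorem aggregate_admm_asymptotic_feasibility_general
    {N : Type*} [Fintype N] [Nonempty N] {m : ℕ} {n : N → ℕ}
    (G : SimpleGraph N) [DecidableRel G.Adj] (hdeg : ∀ i, 1 ≤ G.degree i)
    (f : ∀ i, EuclideanSpace ℝ (Fin (n i)) → EReal)
    (hproper : ∀ i, EProper (f i))
    (A : ∀ i, EuclideanSpace ℝ (Fin (n i)) →ₗ[ℝ] EuclideanSpace ℝ (Fin m))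
    (b : N → EuclideanSpace ℝ (Fin m))
    (K : Set (EuclideanSpace ℝ (Fin m)))
    (hKconv : Convex ℝ K)
    (hcone : ∀ c : ℝ, 0 < c → ∀ x ∈ K, c • x ∈ K)
    (ρ : ℝ) (hρ : 0 < ρ)
    (p r y t : N → ℕ → EuclideanSpace ℝ (Fin m))
    (x : ∀ i, ℕ → EuclideanSpace ℝ (Fin (n i)))
    (hp0 : ∀ i, p i 0 = 0)
    (hp : ∀ i k, p i (k + 1)
      = p i k + ρ • ∑ j ∈ G.neighborFinset i, (y i k - y j k))
    (hr : ∀ i k, r i (k + 1)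
      = ρ • ∑ j ∈ G.neighborFinset i, (y i k + y j k) - (b i + p i (k + 1)))
    (hmin : ∀ i k, t i (k + 1) ∈ K ∧
      ∀ xi : EuclideanSpace ℝ (Fin (n i)), ∀ ti ∈ K,
        f i (x i (k + 1)) + (((1 / (4 * ρ * (G.degree i : ℝ)))
            * ‖A i (x i (k + 1)) + r i (k + 1) - t i (k + 1)‖ ^ 2 : ℝ) : EReal)
          ≤ f i xi + (((1 / (4 * ρ * (G.degree i : ℝ)))
            * ‖A i xi + r i (k + 1) - ti‖ ^ 2 : ℝ) : EReal))
    (hy : ∀ i k, y i (k + 1)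
      = (1 / (2 * ρ * (G.degree i : ℝ)))
          • projSet (polarSet K) (A i (x i (k + 1)) + r i (k + 1)))
    (ystar : EuclideanSpace ℝ (Fin m))
    (hlim : ∀ i, Tendsto (fun k => y i k) atTop (nhds ystar)) :
    (∀ k, 1 ≤ k → (∑ i, t i k) ∈ K) ∧
    Tendsto (fun k => (∑ i, (A i (x i k) - b i)) - ∑ i, t i k) atTop (nhds 0) := by
  have hd : ∀ i, (0 : ℝ) < G.degree i := fun i => by exact_mod_cast hdeg i
  have hres : ∀ i k, A i (x i (k + 1)) + r i (k + 1) - t i (k + 1)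
      = (2 * ρ * (G.degree i : ℝ)) • y i (k + 1) := fun i k => by
    have hproj := isMinOn_norm_sub_of_forall_add_le (g := fun xi => A i xi + r i (k + 1))
      (hproper i) (by have := hd i; positivity) (hmin i k).1 (hmin i k).2
    rw [hy, smul_smul, mul_one_div_cancel (by have := hd i; positivity), one_smul,
      projSet_polarSet_eq_sub_of_isMinOn hKconv hcone (hmin i k).1 hproj]
  have hgap : ∀ k, (∑ i, (A i (x i (k + 1)) - b i)) - ∑ i, t i (k + 1)
      = ∑ i, ((2 * ρ * (G.degree i : ℝ)) • y i (k + 1)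
          - ρ • ∑ j ∈ G.neighborFinset i, (y i k + y j k)) := fun k => by
    rw [← sub_zero (∑ i, _ - _), ← G.sum_eq_zero_of_laplacian_increments ρ p y hp0 hp (k + 1),
      ← Finset.sum_sub_distrib, ← Finset.sum_sub_distrib]
    refine Finset.sum_congr rfl fun i _ => ?_
    rw [← hres, hr]
    abel
  refine ⟨fun k hk => ?_, ?_⟩
  · obtain ⟨k, rfl⟩ := Nat.exists_eq_add_of_le' hk
    exact hKconv.sum_mem_of_pos_smul_mem hcone Finset.univ_nonempty fun i _ => (hmin i k).1
  · rw [← tendsto_add_atTop_iff_nat 1]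
    simpa only [hgap, Finset.sum_const_zero] using
      tendsto_finsetSum _ fun i _ => G.tendsto_degree_smul_sub_sum_neighborFinset ρ hlim i

/-- **Asymptotic primal feasibility of the aggregate dual consensus ADMM.**
If the dual iterates `yᵢᵏ` all converge to some `y*`, then `wᵏ := ∑ᵢ tᵢᵏ ∈ K`
for all `k ≥ 1` and `∑ᵢ(Aᵢxᵢᵏ − bᵢ) − wᵏ → 0`. -/
theorem aggregate_admm_asymptotic_feasibility
    {N : Type*} [Fintype N] [Nonempty N] {m : ℕ} {n : N → ℕ}
    (G : SimpleGraph N) [DecidableRel G.Adj] (hdeg : ∀ i, 1 ≤ G.degree i)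
    (f : ∀ i, EuclideanSpace ℝ (Fin (n i)) → EReal)
    (hconv : ∀ i, EConvexFn (f i)) (hlsc : ∀ i, LowerSemicontinuous (f i))
    (hproper : ∀ i, EProper (f i))
    (A : ∀ i, EuclideanSpace ℝ (Fin (n i)) →ₗ[ℝ] EuclideanSpace ℝ (Fin m))
    (b : N → EuclideanSpace ℝ (Fin m))
    (K : Set (EuclideanSpace ℝ (Fin m)))
    (hne : K.Nonempty) (hcl : IsClosed K) (hKconv : Convex ℝ K)
    (hcone : ∀ c : ℝ, 0 < c → ∀ x ∈ K, c • x ∈ K)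
    (ρ : ℝ) (hρ : 0 < ρ)
    (p r y t : N → ℕ → EuclideanSpace ℝ (Fin m))
    (x : ∀ i, ℕ → EuclideanSpace ℝ (Fin (n i)))
    (hp0 : ∀ i, p i 0 = 0)
    (hp : ∀ i k, p i (k + 1)
      = p i k + ρ • ∑ j ∈ G.neighborFinset i, (y i k - y j k))
    (hr : ∀ i k, r i (k + 1)
      = ρ • ∑ j ∈ G.neighborFinset i, (y i k + y j k) - (b i + p i (k + 1)))
    (hmin : ∀ i k, t i (k + 1) ∈ K ∧
      ∀ xi : EuclideanSpace ℝ (Fin (n i)), ∀ ti ∈ K,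
        f i (x i (k + 1)) + (((1 / (4 * ρ * (G.degree i : ℝ)))
            * ‖A i (x i (k + 1)) + r i (k + 1) - t i (k + 1)‖ ^ 2 : ℝ) : EReal)
          ≤ f i xi + (((1 / (4 * ρ * (G.degree i : ℝ)))
            * ‖A i xi + r i (k + 1) - ti‖ ^ 2 : ℝ) : EReal))
    (hy : ∀ i k, y i (k + 1)
      = (1 / (2 * ρ * (G.degree i : ℝ)))
          • projSet (polarSet K) (A i (x i (k + 1)) + r i (k + 1)))
    (ystar : EuclideanSpace ℝ (Fin m))
    (hlim : ∀ i, Tendsto (fun k => y i k) atTop (nhds ystar)) :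
    (∀ k, 1 ≤ k → (∑ i, t i k) ∈ K) ∧
    Tendsto (fun k => (∑ i, (A i (x i k) - b i)) - ∑ i, t i k) atTop (nhds 0) :=
  aggregate_admm_asymptotic_feasibility_general G hdeg f hproper A b K hKconv hcone ρ hρ p r y t x
    hp0 hp hr hmin hy ystar hlim
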